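/- Assume (A1), (A2) and (A3). Then for every i ∈ Ψ there exists an integer k₀ such that for every n ≥ k₀ there exists σ ∈ 𝒮_n(i) with I_{1,σ} < (χ_i/χ_{i⁺})·I_{2,σ}. -/

import Mathlib

/-!
Because `P₄ = 0`, the only admissible lift of a `Ψ`-word `σ` that ends at the lower level is `σ`
itself, so `I_{1,σ} = χ_{σ₁} p_σ`.

Rows of `P₂` sum to `1` and rows of `P₁` to at most `1`, and by (A3) both have the same support,
so following edges with `0 < p_{a,b} ≤ p_{a⁺,b⁺}` produces a cycle `v → b → ⋯ → v` in `Ψ` whose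
weight does not drop when it is lifted to `Υ`. Take `σ = y c^K S`, where `y` is a walk of the
right length ending at `v` and `S` a path from `v` to `i`. By (A3), jumping to `Υ` at the start
of any of the `K` copies of the cycle gives an admissible lift ending at `i⁺`, of weight at least
`c₀ p_σ` with `c₀ > 0` independent of `K`. Hence `I_{2,σ} ≥ K c₀ χ_{σ₁} p_σ`, which exceeds
`(χ_{i⁺}/χ_i) I_{1,σ}` once `K` is large.
-/

open scoped Classical ENNReal
open Filter MeasureTheory

noncomputable section

namespace MTM

/-- the edge relation of the directed graph `𝒢`: `(i,j) ∈ G₂ ↔ p i j > 0`. -/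
def edge (p : ℕ → ℕ → ℝ) (i j : ℕ) : Prop := 0 < p i j

/-- product of transition weights along a word. -/
def pword (p : ℕ → ℕ → ℝ) : List ℕ → ℝ
  | [] => 1
  | [_] => 1
  | a :: b :: t => p a b * pword p (b :: t)

/-- product of contraction ratios along a word. -/
def sword (sr : ℕ → ℕ → ℝ) : List ℕ → ℝ
  | [] => 1
  | [_] => 1
  | a :: b :: t => sr a b * sword sr (b :: t)

/-- `𝒯(σ)`: all lifts of a word, each letter `i` may be replaced by `i + N`. -/
def lifts (N : ℕ) : List ℕ → Finset (List ℕ)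
  | [] => {[]}
  | i :: t => (lifts N t).biUnion fun l => {i :: l, (i + N) :: l}

/-- `Γ(σ) = G_n ∩ 𝒯(σ)`. -/
def Gam (p : ℕ → ℕ → ℝ) (N : ℕ) (σ : List ℕ) : Finset (List ℕ) :=
  (lifts N σ).filter fun τ => τ.Chain' (edge p)

/-- words over the alphabet `Ψ = {1,…,N}`. -/
def isPsiWord (N : ℕ) (σ : List ℕ) : Prop :=
  σ ≠ [] ∧ ∀ x ∈ σ, x ∈ Finset.Icc 1 N

/-- `σ ∈ 𝒮_*`: a `Ψ`-word having at least one admissible lift. -/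
def isSword (p : ℕ → ℕ → ℝ) (N : ℕ) (σ : List ℕ) : Prop :=
  isPsiWord N σ ∧ (Gam p N σ).Nonempty

/-- `σ ∈ G_*`: admissible words over `Ω = {1,…,2N}`. -/
def isGword (p : ℕ → ℕ → ℝ) (N : ℕ) (σ : List ℕ) : Prop :=
  σ ≠ [] ∧ (∀ x ∈ σ, x ∈ Finset.Icc 1 (2 * N)) ∧ σ.Chain' (edge p)

/-- `σ ∈ H₁^*`: admissible words with all letters in `Ψ`. -/
def isH1word (p : ℕ → ℕ → ℝ) (N : ℕ) (σ : List ℕ) : Prop :=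
  σ ≠ [] ∧ (∀ x ∈ σ, x ∈ Finset.Icc 1 N) ∧ σ.Chain' (edge p)

/-- `σ ∈ H₂^*`: admissible words with all letters in `Υ = {N+1,…,2N}`. -/
def isH2word (p : ℕ → ℕ → ℝ) (N : ℕ) (σ : List ℕ) : Prop :=
  σ ≠ [] ∧ (∀ x ∈ σ, x ∈ Finset.Icc (N + 1) (2 * N)) ∧ σ.Chain' (edge p)

/-- `μ(J_σ) = Σ_{σ̃ ∈ Γ(σ)} χ_{σ̃₁} p_{σ̃}`. -/
def muJ (p : ℕ → ℕ → ℝ) (χ : ℕ → ℝ) (N : ℕ) (σ : List ℕ) : ℝ :=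
  ∑ τ ∈ Gam p N σ, χ (τ.headD 0) * pword p τ

/-- `ℰ_r(σ) = μ(J_σ) s_σ^r`, with `ℰ_r(θ) = 1` for the empty word. -/
def Er (p : ℕ → ℕ → ℝ) (χ : ℕ → ℝ) (sr : ℕ → ℕ → ℝ) (N : ℕ) (r : ℝ) (σ : List ℕ) : ℝ :=
  if σ = [] then 1 else muJ p χ N σ * sword sr σ ^ r

/-- `I_{1,σ}` resp. `I_{2,σ}`: the part of `μ(J_σ)` coming from lifts ending with `i`
(resp. with `i⁺`, when applied with `i + N`). -/
def Ipart (p : ℕ → ℕ → ℝ) (χ : ℕ → ℝ) (N : ℕ) (i : ℕ) (σ : List ℕ) : ℝ :=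
  ∑ τ ∈ (Gam p N σ).filter (fun τ => τ.getLastD 0 = i), χ (τ.headD 0) * pword p τ

/-- all words of a given length over a finite alphabet. -/
def wordsOfLen (S : Finset ℕ) : ℕ → Finset (List ℕ)
  | 0 => {[]}
  | n + 1 => (wordsOfLen S n).biUnion fun l => S.image fun a => a :: l

/-- `𝒮_n` as a finite set of words. -/
def Sn (p : ℕ → ℕ → ℝ) (N n : ℕ) : Finset (List ℕ) :=
  (wordsOfLen (Finset.Icc 1 N) n).filter (isSword p N)

/-- irreducibility of the sub-matrix of `p` indexed by `S`: the corresponding directed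
graph is strongly connected. -/
def irreducibleOn (p : ℕ → ℕ → ℝ) (S : Finset ℕ) : Prop :=
  ∀ i ∈ S, ∀ j ∈ S, ∃ c : List ℕ, (∀ x ∈ c, x ∈ S) ∧ List.Chain (edge p) i (c ++ [j])

/-- Assumption (A1): `P₁, P₂` irreducible and `P₄ = 0`. -/
def A1 (p : ℕ → ℕ → ℝ) (N : ℕ) : Prop :=
  irreducibleOn p (Finset.Icc 1 N) ∧
    irreducibleOn (fun a b => p (a + N) (b + N)) (Finset.Icc 1 N) ∧
    ∀ i ∈ Finset.Icc 1 N, ∀ j ∈ Finset.Icc 1 N, p (i + N) j = 0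

/-- Assumption (A2). -/
def A2 (p : ℕ → ℕ → ℝ) (N : ℕ) : Prop :=
  ∀ i ∈ Finset.Icc 1 N,
    2 ≤ ((Finset.Icc 1 N).filter fun j => 0 < p i j).card ∧
      2 ≤ ((Finset.Icc 1 N).filter fun j => 0 < p (i + N) (j + N)).card

/-- Assumption (A3): `ℳ_{i,j} = ∅` or `ℳ_{i,j} = {(i,j),(i,j⁺),(i⁺,j⁺)}`. -/
def A3 (p : ℕ → ℕ → ℝ) (N : ℕ) : Prop :=
  ∀ i ∈ Finset.Icc 1 N, ∀ j ∈ Finset.Icc 1 N,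
    (p i j = 0 ∧ p i (j + N) = 0 ∧ p (i + N) j = 0 ∧ p (i + N) (j + N) = 0) ∨
      (0 < p i j ∧ 0 < p i (j + N) ∧ p (i + N) j = 0 ∧ 0 < p (i + N) (j + N))

/-- Assumption (A4): `ℳ_{i,j} = ∅` or `ℳ_{i,j} = 𝒩_{i,j}`. -/
def A4 (p : ℕ → ℕ → ℝ) (N : ℕ) : Prop :=
  ∀ i ∈ Finset.Icc 1 N, ∀ j ∈ Finset.Icc 1 N,
    (p i j = 0 ∧ p i (j + N) = 0 ∧ p (i + N) j = 0 ∧ p (i + N) (j + N) = 0) ∨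
      (0 < p i j ∧ 0 < p i (j + N) ∧ 0 < p (i + N) j ∧ 0 < p (i + N) (j + N))

/-- Assumption (A5): `P₁` is irreducible. -/
def A5 (p : ℕ → ℕ → ℝ) (N : ℕ) : Prop := irreducibleOn p (Finset.Icc 1 N)

/-- `T_σ = T_{σ₁σ₂} ∘ ⋯ ∘ T_{σ_{n-1}σ_n}` (identity for words of length `≤ 1`). -/
def Tword {E : Type*} (T : ℕ → ℕ → E → E) : List ℕ → E → E
  | [], x => x
  | [_], x => x
  | a :: b :: t, x => T a b (Tword T (b :: t) x)

/-- the cylinder set `J_σ = T_σ (J_{σ_n})`. -/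
def Jword {E : Type*} (T : ℕ → ℕ → E → E) (J : ℕ → Set E) (σ : List ℕ) : Set E :=
  Tword T σ '' J (σ.getLastD 0)

/-- the Mauldin–Williams fractal `K = ⋂_k ⋃_{σ ∈ G_k} J_σ`. -/
def attractor {E : Type*} (p : ℕ → ℕ → ℝ) (N : ℕ) (T : ℕ → ℕ → E → E) (J : ℕ → Set E) :
    Set E :=
  ⋂ n : ℕ, ⋃ σ ∈ {σ : List ℕ | isGword p N σ ∧ σ.length = n + 1}, Jword T J σ

/-- `μ` is reducible: `μ = ν₁ ∘ π₁⁻¹` for the Markov-type measure `ν₁` associated with some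
`N × N` row-stochastic matrix and positive probability vector; equivalently, the cylinder
values of `μ` are of Markov type. -/
def reducible {E : Type*} [MeasurableSpace E] (p : ℕ → ℕ → ℝ) (N : ℕ)
    (T : ℕ → ℕ → E → E) (J : ℕ → Set E) (μ : Measure E) : Prop :=
  ∃ (pt : ℕ → ℕ → ℝ) (χt : ℕ → ℝ),
    (∀ i ∈ Finset.Icc 1 N, ∀ j ∈ Finset.Icc 1 N, 0 ≤ pt i j) ∧
      (∀ i ∈ Finset.Icc 1 N, ∑ j ∈ Finset.Icc 1 N, pt i j = 1) ∧
      (∀ i ∈ Finset.Icc 1 N, 0 < χt i) ∧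
      (∑ i ∈ Finset.Icc 1 N, χt i = 1) ∧
      ∀ σ : List ℕ, isSword p N σ →
        μ (Jword T J σ) = ENNReal.ofReal (χt (σ.headD 0) * pword pt σ)

/-- `e^r_{k,r}(μ)`: the `k`-th quantization error of order `r`, to the `r`-th power. -/
def quantErr {E : Type*} [PseudoMetricSpace E] [MeasurableSpace E] (r : ℝ) (μ : Measure E)
    (k : ℕ) : ℝ :=
  sInf ((fun α : Set E => ∫ x, Metric.infDist x α ^ r ∂μ) ''
    {α : Set E | α.Nonempty ∧ α.Finite ∧ α.ncard ≤ k})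

/-- the upper quantization coefficient `Q̄_r^s(μ) = limsup_k k^{r/s} e^r_{k,r}(μ)`. -/
def upperQC {E : Type*} [PseudoMetricSpace E] [MeasurableSpace E] (r s : ℝ)
    (μ : Measure E) : ℝ≥0∞ :=
  limsup (fun k : ℕ => ENNReal.ofReal ((k : ℝ) ^ (r / s) * quantErr r μ k)) atTop

/-- the lower quantization coefficient `Q̲_r^s(μ)`. -/
def lowerQC {E : Type*} [PseudoMetricSpace E] [MeasurableSpace E] (r s : ℝ)
    (μ : Measure E) : ℝ≥0∞ :=
  liminf (fun k : ℕ => ENNReal.ofReal ((k : ℝ) ^ (r / s) * quantErr r μ k)) atTop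

/-- the upper quantization dimension `D̄_r(μ) = limsup_k log k / (-log e_{k,r}(μ))`. -/
def upperQD {E : Type*} [PseudoMetricSpace E] [MeasurableSpace E] (r : ℝ)
    (μ : Measure E) : ℝ :=
  limsup (fun k : ℕ => Real.log k / (-Real.log (quantErr r μ k ^ (1 / r)))) atTop

/-- the lower quantization dimension `D̲_r(μ)`. -/
def lowerQD {E : Type*} [PseudoMetricSpace E] [MeasurableSpace E] (r : ℝ)
    (μ : Measure E) : ℝ :=
  liminf (fun k : ℕ => Real.log k / (-Real.log (quantErr r μ k ^ (1 / r)))) atTop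

/-- spectral radius of a real matrix: the largest modulus of a complex eigenvalue. -/
def specRad {n : Type*} [Fintype n] [DecidableEq n] (M : Matrix n n ℝ) : ℝ :=
  sSup (norm '' spectrum ℂ (M.map (algebraMap ℝ ℂ)))

/-- `A₁(s) = ((p_{i,j} s_{i,j}^r)^s)_{i,j=1}^N`. -/
def matA1 (p sr : ℕ → ℕ → ℝ) (N : ℕ) (r s : ℝ) : Matrix (Fin N) (Fin N) ℝ :=
  Matrix.of fun i j => (p (i.1 + 1) (j.1 + 1) * sr (i.1 + 1) (j.1 + 1) ^ r) ^ s

/-- `A₂(s) = ((p_{i⁺,j⁺} s_{i⁺,j⁺}^r)^s)_{i,j=1}^N`. -/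
def matA2 (p sr : ℕ → ℕ → ℝ) (N : ℕ) (r s : ℝ) : Matrix (Fin N) (Fin N) ℝ :=
  Matrix.of fun i j => (p (i.1 + 1 + N) (j.1 + 1 + N) * sr (i.1 + 1 + N) (j.1 + 1 + N) ^ r) ^ s

/-- `A₃(s) = ((p_{i,j⁺} s_{i,j⁺}^r)^s)_{i,j=1}^N`. -/
def matA3 (p sr : ℕ → ℕ → ℝ) (N : ℕ) (r s : ℝ) : Matrix (Fin N) (Fin N) ℝ :=
  Matrix.of fun i j => (p (i.1 + 1) (j.1 + 1 + N) * sr (i.1 + 1) (j.1 + 1 + N) ^ r) ^ s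

/-- `A₄(s) = ((p_{i⁺,j} s_{i⁺,j}^r)^s)_{i,j=1}^N`. -/
def matA4 (p sr : ℕ → ℕ → ℝ) (N : ℕ) (r s : ℝ) : Matrix (Fin N) (Fin N) ℝ :=
  Matrix.of fun i j => (p (i.1 + 1 + N) (j.1 + 1) * sr (i.1 + 1 + N) (j.1 + 1) ^ r) ^ s

/-- the block matrix `A(s) = [[A₁(s), A₃(s)], [A₄(s), A₂(s)]]`. -/
def matA (p sr : ℕ → ℕ → ℝ) (N : ℕ) (r s : ℝ) :
    Matrix (Fin N ⊕ Fin N) (Fin N ⊕ Fin N) ℝ :=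
  Matrix.fromBlocks (matA1 p sr N r s) (matA3 p sr N r s) (matA4 p sr N r s) (matA2 p sr N r s)

/-- `p̲ = min_{(i,j) ∈ G₂} p_{i,j}`. -/
def pMin (p : ℕ → ℕ → ℝ) (N : ℕ) : ℝ :=
  sInf {x | ∃ i ∈ Finset.Icc 1 (2 * N), ∃ j ∈ Finset.Icc 1 (2 * N), 0 < p i j ∧ x = p i j}

/-- `p̄ = max_{(i,j) ∈ G₂} p_{i,j}`. -/
def pMax (p : ℕ → ℕ → ℝ) (N : ℕ) : ℝ :=
  sSup {x | ∃ i ∈ Finset.Icc 1 (2 * N), ∃ j ∈ Finset.Icc 1 (2 * N), 0 < p i j ∧ x = p i j}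

/-- `s̲ = min_{(i,j) ∈ 𝒮₂} s_{i,j}`. -/
def sMin (p sr : ℕ → ℕ → ℝ) (N : ℕ) : ℝ :=
  sInf {x | ∃ i ∈ Finset.Icc 1 N, ∃ j ∈ Finset.Icc 1 N, isSword p N [i, j] ∧ x = sr i j}

/-- `s̄ = max_{(i,j) ∈ 𝒮₂} s_{i,j}`. -/
def sMax (p sr : ℕ → ℕ → ℝ) (N : ℕ) : ℝ :=
  sSup {x | ∃ i ∈ Finset.Icc 1 N, ∃ j ∈ Finset.Icc 1 N, isSword p N [i, j] ∧ x = sr i j}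

/-- `χ̲ = min_{1 ≤ i ≤ 2N} χ_i`. -/
def chiMin (χ : ℕ → ℝ) (N : ℕ) : ℝ := sInf {x | ∃ i ∈ Finset.Icc 1 (2 * N), x = χ i}

/-- `χ̄ = max_{1 ≤ i ≤ 2N} χ_i`. -/
def chiMax (χ : ℕ → ℝ) (N : ℕ) : ℝ := sSup {x | ∃ i ∈ Finset.Icc 1 (2 * N), x = χ i}

/-- `t` satisfies the defining property of `t_r`:
`(1/n) log Σ_{σ ∈ 𝒮_n} ℰ_r(σ)^{t/(t+r)} → 0`. -/
def trCond (p : ℕ → ℕ → ℝ) (χ : ℕ → ℝ) (sr : ℕ → ℕ → ℝ) (N : ℕ) (r t : ℝ) : Prop :=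
  0 < t ∧
    Tendsto (fun n : ℕ => (n : ℝ)⁻¹ *
      Real.log (∑ σ ∈ Sn p N n, Er p χ sr N r σ ^ (t / (t + r)))) atTop (nhds 0)

/-- the initial word of length `n` of an infinite sequence. -/
def seqTake (x : ℕ → ℕ) (n : ℕ) : List ℕ := (List.range n).map x

/-- `Γ` is a finite maximal antichain among the words satisfying `W`, with respect to the
infinite sequences satisfying `Wseq`. -/
def isMaxAntichain (W : List ℕ → Prop) (Wseq : (ℕ → ℕ) → Prop) (Γ : Finset (List ℕ)) : Prop :=
  (∀ σ ∈ Γ, W σ) ∧ (∀ σ ∈ Γ, ∀ τ ∈ Γ, σ ≠ τ → ¬σ <+: τ) ∧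
    ∀ x : ℕ → ℕ, Wseq x → ∃ n : ℕ, 1 ≤ n ∧ seqTake x n ∈ Γ

/-- infinite admissible sequences with letters in `Ψ`. -/
def isH1seq (p : ℕ → ℕ → ℝ) (N : ℕ) (x : ℕ → ℕ) : Prop :=
  (∀ n, x n ∈ Finset.Icc 1 N) ∧ ∀ n, 0 < p (x n) (x (n + 1))

/-- infinite admissible sequences with letters in `Υ`. -/
def isH2seq (p : ℕ → ℕ → ℝ) (N : ℕ) (x : ℕ → ℕ) : Prop :=
  (∀ n, x n ∈ Finset.Icc (N + 1) (2 * N)) ∧ ∀ n, 0 < p (x n) (x (n + 1))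

/-- minimal length of a word in `Γ`. -/
def minLen (Γ : Finset (List ℕ)) : ℕ := sInf {n | ∃ σ ∈ Γ, σ.length = n}

/-- maximal length of a word in `Γ`. -/
def maxLen (Γ : Finset (List ℕ)) : ℕ := sSup {n | ∃ σ ∈ Γ, σ.length = n}

/-- `Λ_{k,r} = {σ ∈ 𝒮^* : ℰ_r(σ) < c₁^k ≤ ℰ_r(σ^♭)}`. -/
def LamSet (p : ℕ → ℕ → ℝ) (χ : ℕ → ℝ) (sr : ℕ → ℕ → ℝ) (N : ℕ) (r c1 : ℝ) (k : ℕ) :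
    Set (List ℕ) :=
  {σ | isSword p N σ ∧ Er p χ sr N r σ < c1 ^ k ∧ c1 ^ k ≤ Er p χ sr N r σ.dropLast}

/-- `ℒ(σ) = {σ, σ⁺} ∪ {σ|_h ∗ (σ_{h+1}⁺, …, σ_n⁺) : 1 ≤ h ≤ n − 1}`. -/
def Lset (N : ℕ) (σ : List ℕ) : Finset (List ℕ) :=
  (Finset.range (σ.length + 1)).image fun h =>
    σ.take h ++ (σ.drop h).map (fun x => x + N)

/-- The block `P₂`, reindexed by `Ψ`. -/
def upperBlock (p : ℕ → ℕ → ℝ) (N a b : ℕ) : ℝ := p (a + N) (b + N)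

/-- `Lset N σ` consists of the `jumpLift N (σ.take h) (σ.drop h)`, `h ≤ σ.length`. -/
def jumpLift (N : ℕ) (x z : List ℕ) : List ℕ := x ++ z.map (· + N)

section Weights

variable {p q : ℕ → ℕ → ℝ}

@[simp]
lemma pword_cons_cons (a b : ℕ) (t : List ℕ) :
    pword p (a :: b :: t) = p a b * pword p (b :: t) := rfl

lemma pword_nonneg (hp : ∀ a b, 0 ≤ p a b) : ∀ l : List ℕ, 0 ≤ pword p l
  | [] | [_] => zero_le_one
  | a :: b :: t => mul_nonneg (hp a b) (pword_nonneg hp (b :: t))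

lemma pword_pos : ∀ {l : List ℕ}, l.IsChain (edge p) → 0 < pword p l
  | [], _ | [_], _ => zero_lt_one
  | _ :: _ :: _, h =>
      mul_pos (List.isChain_cons_cons.1 h).1 (pword_pos (List.isChain_cons_cons.1 h).2)

lemma pword_append_of_getLast? {v : ℕ} :
    ∀ {x : List ℕ}, x.getLast? = some v → ∀ y : List ℕ,
      pword p (x ++ y) = pword p x * pword p (v :: y)
  | [a], hx, y => by simp_all [pword]
  | a :: b :: t, hx, y => by
      rw [List.getLast?_cons_cons] at hx
      rw [List.cons_append, List.cons_append, pword_cons_cons, pword_cons_cons, ← List.cons_append,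
        pword_append_of_getLast? hx y, mul_assoc]

lemma pword_map_add (N : ℕ) : ∀ l : List ℕ, pword p (l.map (· + N)) = pword (upperBlock p N) l
  | [] | [_] => rfl
  | a :: b :: t => by
      show p (a + N) (b + N) * pword p ((b :: t).map (· + N)) = _
      rw [pword_map_add N (b :: t)]
      rfl

lemma pword_le_pword {R : ℕ → ℕ → Prop} (hp : ∀ a b, 0 ≤ p a b)
    (hpq : ∀ a b, R a b → p a b ≤ q a b) : ∀ {l : List ℕ}, l.IsChain R → pword p l ≤ pword q l
  | [], _ | [_], _ => le_rfl
  | a :: b :: t, h => by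
      rw [List.isChain_cons_cons] at h
      exact mul_le_mul (hpq a b h.1) (pword_le_pword hp hpq h.2) (pword_nonneg hp _)
        ((hp a b).trans (hpq a b h.1))

lemma pword_jumpLift {N a : ℕ} {x : List ℕ} (hx : x.getLast? = some a) (b : ℕ) (z : List ℕ) :
    pword p (jumpLift N x (b :: z)) =
      pword p x * p a (b + N) * pword (upperBlock p N) (b :: z) := by
  rw [jumpLift, pword_append_of_getLast? hx, ← pword_map_add, List.map_cons, pword_cons_cons,
    mul_assoc]

end Weights

section Chains

variable {R : ℕ → ℕ → Prop}

lemma isChain_append_of_getLast? {x y : List ℕ} {v : ℕ} (hx : x.IsChain R)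
    (hxv : x.getLast? = some v) (hy : (v :: y).IsChain R) : (x ++ y).IsChain R := by
  rw [List.isChain_cons] at hy
  refine List.isChain_append.2 ⟨hx, hy.2, ?_⟩
  intro a ha
  cases Option.mem_some_iff.1 (hxv ▸ ha)
  exact hy.1

variable {v : ℕ} {c : List ℕ}

lemma getLast?_append_flatten_replicate {y : List ℕ} (hy : y.getLast? = some v)
    (hc : c.getLast? = some v) (k : ℕ) : (y ++ (List.replicate k c).flatten).getLast? = some v := by
  induction k with
  | zero => simpa using hy
  | succ k ih =>
      rw [List.replicate_succ', List.flatten_append, ← List.append_assoc, List.getLast?_append]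
      simp [hc]

lemma pword_cons_flatten_replicate_append {p : ℕ → ℕ → ℝ} (hc : c.getLast? = some v)
    (y : List ℕ) (k : ℕ) :
    pword p (v :: ((List.replicate k c).flatten ++ y)) =
      pword p (v :: c) ^ k * pword p (v :: y) := by
  induction k with
  | zero => simp
  | succ k ih =>
      have hvc : (v :: c).getLast? = some v := by simp [List.getLast?_cons, hc]
      rw [List.replicate_succ, List.flatten_cons, List.append_assoc, ← List.cons_append,
        pword_append_of_getLast? hvc, ih, pow_succ']
      ring

lemma isChain_cons_flatten_replicate_append (hc : c.getLast? = some v)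
    (hcR : (v :: c).IsChain R) {y : List ℕ} (hy : (v :: y).IsChain R) (k : ℕ) :
    (v :: ((List.replicate k c).flatten ++ y)).IsChain R := by
  induction k with
  | zero => simpa using hy
  | succ k ih =>
      rw [List.replicate_succ, List.flatten_cons, List.append_assoc, ← List.cons_append]
      exact isChain_append_of_getLast? hcR (by simp [List.getLast?_cons, hc]) ih

end Chains

section Lifts

variable {N : ℕ}

lemma mem_lifts_cons {τ t : List ℕ} {a : ℕ} :
    τ ∈ lifts N (a :: t) ↔ ∃ l ∈ lifts N t, τ = a :: l ∨ τ = (a + N) :: l := by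
  simp [lifts]

lemma jumpLift_mem_lifts : ∀ x z : List ℕ, jumpLift N x z ∈ lifts N (x ++ z)
  | [], [] => by simp [jumpLift, lifts]
  | [], b :: z => mem_lifts_cons.2 ⟨jumpLift N [] z, jumpLift_mem_lifts [] z, Or.inr rfl⟩
  | a :: x, z => mem_lifts_cons.2 ⟨jumpLift N x z, jumpLift_mem_lifts x z, Or.inl rfl⟩

lemma self_mem_lifts (σ : List ℕ) : σ ∈ lifts N σ := by
  simpa [jumpLift] using jumpLift_mem_lifts (N := N) σ []

lemma headD_of_mem_lifts {a : ℕ} {t τ : List ℕ} (h : τ ∈ lifts N (a :: t)) :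
    τ.headD 0 = a ∨ τ.headD 0 = a + N := by
  obtain ⟨l, -, rfl | rfl⟩ := mem_lifts_cons.1 h <;> simp

lemma getLastD_jumpLift (x : List ℕ) {z : List ℕ} {i : ℕ} (hz : z.getLast? = some i) :
    (jumpLift N x z).getLastD 0 = i + N := by
  simp [jumpLift, List.getLastD_eq_getLast?, List.getLast?_append, hz]

lemma countP_jumpLift {x z : List ℕ} (hx : ∀ a ∈ x, a ≤ N) (hz : ∀ b ∈ z, 0 < b) :
    (jumpLift N x z).countP (· ≤ N) = x.length := by
  rw [jumpLift, List.countP_append, List.countP_eq_length.2 (by simpa using hx),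
    List.countP_eq_zero.2 (by simpa using hz), add_zero]

/-- Since `P₄ = 0`, an admissible lift that ends at the lower level never left it. -/
lemma eq_of_mem_lifts {p : ℕ → ℕ → ℝ} (hN : 0 < N)
    (hP4 : ∀ a ∈ Finset.Icc 1 N, ∀ b ∈ Finset.Icc 1 N, p (a + N) b = 0) :
    ∀ {σ τ : List ℕ}, (∀ x ∈ σ, x ∈ Finset.Icc 1 N) → τ ∈ lifts N σ → τ.IsChain (edge p) →
      τ.getLastD 0 = σ.getLastD 0 → τ = σ
  | [], τ, _, h, _, _ => by simpa [lifts] using h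
  | [a], τ, _, h, _, hl => by
      obtain ⟨l, hl', rfl | rfl⟩ := mem_lifts_cons.1 h <;>
        simp only [lifts, Finset.mem_singleton] at hl' <;> subst hl'
      · rfl
      · change a + N = a at hl
        omega
  | a :: b :: t, τ, hσ, h, hc, hl => by
      obtain ⟨l, hlt, hτ⟩ := mem_lifts_cons.1 h
      obtain ⟨b', l', rfl⟩ : ∃ b' l', l = b' :: l' := by
        obtain ⟨l', -, rfl | rfl⟩ := mem_lifts_cons.1 hlt <;> exact ⟨_, _, rfl⟩
      have hσ' : ∀ x ∈ b :: t, x ∈ Finset.Icc 1 N := fun x hx => hσ x (List.mem_cons_of_mem a hx)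
      rcases hτ with rfl | rfl
      · rw [eq_of_mem_lifts hN hP4 hσ' hlt hc.tail (by simpa using hl)]
      · cases eq_of_mem_lifts hN hP4 hσ' hlt hc.tail (by simpa using hl)
        exact absurd (hP4 a (hσ a (by simp)) b (hσ' b (by simp)))
          (List.isChain_cons_cons.1 hc).1.ne'

lemma Ipart_getLastD_eq {p : ℕ → ℕ → ℝ} {χ : ℕ → ℝ} (hN : 0 < N)
    (hP4 : ∀ a ∈ Finset.Icc 1 N, ∀ b ∈ Finset.Icc 1 N, p (a + N) b = 0) {σ : List ℕ}
    (hσ : ∀ x ∈ σ, x ∈ Finset.Icc 1 N) (hc : σ.IsChain (edge p)) :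
    Ipart p χ N (σ.getLastD 0) σ = χ (σ.headD 0) * pword p σ := by
  have : (Gam p N σ).filter (fun τ => τ.getLastD 0 = σ.getLastD 0) = {σ} := by
    refine Finset.eq_singleton_iff_unique_mem.2 ⟨?_, fun τ hτ => ?_⟩
    · exact Finset.mem_filter.2 ⟨Finset.mem_filter.2 ⟨self_mem_lifts σ, hc⟩, rfl⟩
    · simp only [Gam, Finset.mem_filter] at hτ
      exact eq_of_mem_lifts hN hP4 hσ hτ.1.1 hτ.1.2 hτ.2
  rw [Ipart, this, Finset.sum_singleton]

lemma isSword_of_isChain {p : ℕ → ℕ → ℝ} {σ : List ℕ} (hne : σ ≠ [])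
    (hσ : ∀ x ∈ σ, x ∈ Finset.Icc 1 N) (hc : σ.IsChain (edge p)) : isSword p N σ :=
  ⟨⟨hne, hσ⟩, σ, Finset.mem_filter.2 ⟨self_mem_lifts σ, hc⟩⟩

end Lifts

section A3

variable {p : ℕ → ℕ → ℝ} {N a b : ℕ}

lemma A3.upper_lower_eq_zero (h : A3 p N) (ha : a ∈ Finset.Icc 1 N) (hb : b ∈ Finset.Icc 1 N) :
    p (a + N) b = 0 := by
  rcases h a ha b hb with ⟨-, -, h0, -⟩ | ⟨-, -, h0, -⟩ <;> exact h0

lemma A3.upper_pos (h : A3 p N) (ha : a ∈ Finset.Icc 1 N) (hb : b ∈ Finset.Icc 1 N)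
    (hab : 0 < p a b) : 0 < upperBlock p N a b := by
  rcases h a ha b hb with ⟨h0, -⟩ | ⟨-, -, -, h⟩
  · exact absurd h0 hab.ne'
  · exact h

lemma A3.pos_of_upper_pos (h : A3 p N) (ha : a ∈ Finset.Icc 1 N) (hb : b ∈ Finset.Icc 1 N)
    (hab : 0 < upperBlock p N a b) : 0 < p a b := by
  rcases h a ha b hb with ⟨-, -, -, h0⟩ | ⟨h, -⟩
  · exact absurd h0 hab.ne'
  · exact h

lemma A3.jump_pos (h : A3 p N) (ha : a ∈ Finset.Icc 1 N) (hb : b ∈ Finset.Icc 1 N)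
    (hab : 0 < p a b) : 0 < p a (b + N) := by
  rcases h a ha b hb with ⟨h0, -⟩ | ⟨-, h, -⟩
  · exact absurd h0 hab.ne'
  · exact h

lemma A3.isChain_upperBlock (h : A3 p N) {l : List ℕ} (hl : ∀ x ∈ l, x ∈ Finset.Icc 1 N)
    (hc : l.IsChain (edge p)) : l.IsChain (edge (upperBlock p N)) :=
  hc.imp_of_mem_imp fun _ _ ha hb hab => h.upper_pos (hl _ ha) (hl _ hb) hab

lemma A3.jumpLift_mem_Gam (h : A3 p N) {x z : List ℕ} (hxz : ∀ y ∈ x ++ z, y ∈ Finset.Icc 1 N)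
    (hc : (x ++ z).IsChain (edge p)) : jumpLift N x z ∈ Gam p N (x ++ z) := by
  refine Finset.mem_filter.2 ⟨jumpLift_mem_lifts x z, ?_⟩
  rw [List.isChain_append] at hc
  refine List.isChain_append.2 ⟨hc.1, ?_, ?_⟩
  · exact List.isChain_map _ |>.2 <|
      h.isChain_upperBlock (fun y hy => hxz y (List.mem_append_right _ hy)) hc.2.1
  · intro a ha b' hb'
    rw [List.head?_map, Option.mem_map] at hb'
    obtain ⟨b, hb, rfl⟩ := hb'
    exact h.jump_pos (hxz a (List.mem_append_left _ (List.mem_of_mem_getLast? ha)))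
      (hxz b (List.mem_append_right _ (List.mem_of_mem_head? hb))) (hc.2.2 a ha b hb)

end A3

section Cycle

lemma exists_isChain_cycle {S : Finset ℕ} {R : ℕ → ℕ → Prop} (hS : S.Nonempty)
    (h : ∀ a ∈ S, ∃ b ∈ S, R a b) :
    ∃ v ∈ S, ∃ c : List ℕ, c.getLast? = some v ∧ (∀ x ∈ c, x ∈ S) ∧ (v :: c).IsChain R := by
  choose! f hfS hfR using h
  have hf : ∀ m, Set.MapsTo f^[m] S S := fun m => Set.MapsTo.iterate hfS m
  obtain ⟨a, ha⟩ := hS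
  obtain ⟨s, -, t, -, hst, heq⟩ := Finset.exists_ne_map_eq_of_card_lt_of_maps_to
    (s := Finset.range (S.card + 1)) (by simp) (f := fun m => f^[m] a) (fun m _ => hf m ha)
  wlog hlt : s < t generalizing s t
  · exact this t s hst.symm heq.symm (by omega)
  have hv : f^[t - s] (f^[s] a) = f^[s] a := by
    rw [← Function.iterate_add_apply, Nat.sub_add_cancel hlt.le]
    exact heq.symm
  refine ⟨f^[s] a, hf s ha, (List.range (t - s)).map (fun m => f^[m + 1] (f^[s] a)), ?_, ?_, ?_⟩
  · rw [List.getLast?_map, List.getLast?_range, if_neg (by omega), Option.map_some,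
      Nat.sub_add_cancel (by omega), hv]
  · simp only [List.mem_map, List.mem_range]
    rintro _ ⟨m, -, rfl⟩
    exact hf _ (hf s ha)
  · have horbit : f^[s] a :: (List.range (t - s)).map (fun m => f^[m + 1] (f^[s] a))
        = (List.range (t - s + 1)).map (fun m => f^[m] (f^[s] a)) := by
      simp [List.range_succ_eq_map, Function.comp_def]
    rw [horbit, List.isChain_map, List.isChain_range_succ]
    intro m _
    rw [Function.iterate_succ_apply']
    exact hfR _ (hf m (hf s ha))

lemma exists_pos_le_of_sum_le {ι : Type*} {S : Finset ι} {f g : ι → ℝ} (hf : ∀ b ∈ S, 0 ≤ f b)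
    (hg : 0 < ∑ b ∈ S, g b) (h : ∑ b ∈ S, f b ≤ ∑ b ∈ S, g b) : ∃ b ∈ S, 0 < g b ∧ f b ≤ g b := by
  by_contra! hcon
  obtain ⟨b, hb, hgb⟩ := Finset.exists_lt_of_sum_lt (f := fun _ => (0 : ℝ)) (by simpa using hg)
  refine h.not_gt (Finset.sum_lt_sum (fun b hb => ?_) ⟨b, hb, hcon b hb hgb⟩)
  by_cases hgb' : 0 < g b
  · exact (hcon b hb hgb').le
  · exact (not_lt.1 hgb').trans (hf b hb)

variable {p : ℕ → ℕ → ℝ} {N : ℕ}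

lemma sum_upperBlock_eq_one
    (hpsum : ∀ i ∈ Finset.Icc 1 (2 * N), ∑ j ∈ Finset.Icc 1 (2 * N), p i j = 1)
    (hP4 : ∀ a ∈ Finset.Icc 1 N, ∀ b ∈ Finset.Icc 1 N, p (a + N) b = 0) {a : ℕ}
    (ha : a ∈ Finset.Icc 1 N) : ∑ b ∈ Finset.Icc 1 N, upperBlock p N a b = 1 := by
  rw [Finset.mem_Icc] at ha
  rw [← hpsum (a + N) (Finset.mem_Icc.2 ⟨by omega, by omega⟩)]
  have : ∑ b ∈ Finset.Icc 1 N, upperBlock p N a b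
      = ∑ b ∈ (Finset.Icc 1 N).map (addRightEmbedding N), p (a + N) b := by
    rw [Finset.sum_map]; rfl
  rw [this, Finset.map_add_right_Icc]
  refine Finset.sum_subset (Finset.Icc_subset_Icc (by omega) (by omega)) fun b hb hb' => ?_
  simp only [Finset.mem_Icc] at hb hb'
  exact hP4 a (Finset.mem_Icc.2 ⟨by omega, by omega⟩) b (Finset.mem_Icc.2 ⟨by omega, by omega⟩)

structure GoodCycle (p : ℕ → ℕ → ℝ) (N v b : ℕ) (c : List ℕ) : Prop where
  getLast?_eq : (b :: c).getLast? = some v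
  mem : ∀ x ∈ v :: b :: c, x ∈ Finset.Icc 1 N
  isChain : (v :: b :: c).IsChain fun a b => 0 < p a b ∧ p a b ≤ upperBlock p N a b

lemma exists_goodCycle (hp : ∀ a b, 0 ≤ p a b)
    (hpsum : ∀ i ∈ Finset.Icc 1 (2 * N), ∑ j ∈ Finset.Icc 1 (2 * N), p i j = 1)
    (hA3 : A3 p N) (hΨ : (Finset.Icc 1 N).Nonempty) :
    ∃ v b c, GoodCycle p N v b c := by
  have hedge : ∀ a ∈ Finset.Icc 1 N, ∃ b ∈ Finset.Icc 1 N,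
      0 < p a b ∧ p a b ≤ upperBlock p N a b := by
    intro a ha
    have hQ := sum_upperBlock_eq_one hpsum (fun _ ha _ hb => hA3.upper_lower_eq_zero ha hb) ha
    have hrow : ∑ b ∈ Finset.Icc 1 N, p a b ≤ 1 := by
      refine (Finset.sum_le_sum_of_subset_of_nonneg ?_ fun b _ _ => hp a b).trans_eq
        (hpsum a ?_) <;> simp only [Finset.subset_iff, Finset.mem_Icc] at ha ⊢ <;> omega
    obtain ⟨b, hb, hq, hle⟩ := exists_pos_le_of_sum_le (fun b _ => hp a b)
      (hQ ▸ one_pos) (hQ ▸ hrow)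
    exact ⟨b, hb, hA3.pos_of_upper_pos ha hb hq, hle⟩
  obtain ⟨v, hv, _ | ⟨b, c⟩, hcv, hcΨ, hch⟩ := exists_isChain_cycle hΨ hedge
  · cases hcv
  · exact ⟨v, b, c, hcv, List.forall_mem_cons.2 ⟨hv, hcΨ⟩, hch⟩

end Cycle

section Construction

variable {p : ℕ → ℕ → ℝ} {N v b : ℕ} {c : List ℕ}

namespace GoodCycle

lemma isChain_edge (hC : GoodCycle p N v b c) : (v :: b :: c).IsChain (edge p) :=
  hC.isChain.imp fun _ _ h => h.1

lemma pword_le (hp : ∀ a b, 0 ≤ p a b) (hC : GoodCycle p N v b c) :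
    pword p (v :: b :: c) ≤ pword (upperBlock p N) (v :: b :: c) :=
  pword_le_pword hp (fun _ _ h => h.2) hC.isChain

lemma upperBlock_pos (hC : GoodCycle p N v b c) : 0 < upperBlock p N v b :=
  (List.isChain_cons_cons.1 hC.isChain).1.1.trans_le (List.isChain_cons_cons.1 hC.isChain).1.2

lemma exists_walk (hC : GoodCycle p N v b c) {m : ℕ} (hm : 0 < m) :
    ∃ y : List ℕ, y.length = m ∧ y.getLast? = some v ∧ y.IsChain (edge p) ∧
      ∀ x ∈ y, x ∈ Finset.Icc 1 N := by
  set W := v :: ((List.replicate m (b :: c)).flatten ++ [])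
  have hW : m ≤ W.length := by
    simp only [W, List.length_cons, List.length_append, List.length_flatten, List.map_replicate,
      List.sum_replicate, smul_eq_mul, List.length_nil]
    nlinarith
  refine ⟨W.drop (W.length - m), by simp only [List.length_drop]; omega, ?_,
    (isChain_cons_flatten_replicate_append hC.getLast?_eq hC.isChain_edge
      (List.isChain_singleton v) m).drop _, fun x hx => ?_⟩
  · rw [List.getLast?_drop, if_neg (by omega)]
    simpa [W] using getLast?_append_flatten_replicate (y := [v]) rfl hC.getLast?_eq m
  · have hx : x ∈ W := List.mem_of_mem_drop hx
    simp only [W, List.append_nil, List.mem_cons, List.mem_flatten, List.mem_replicate] at hx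
    rcases hx with rfl | ⟨l, ⟨-, rfl⟩, hx⟩
    · exact hC.mem x (by simp)
    · exact hC.mem x (List.mem_cons_of_mem v hx)

end GoodCycle

/-- The factor `c₀` by which a jump to the upper level at the start of a copy of the cycle
`v → b → ⋯ → v`, followed by the path `v → S`, at worst shrinks the weight of a word. -/
def jumpFactor (p : ℕ → ℕ → ℝ) (N v b : ℕ) (S : List ℕ) : ℝ :=
  p v (b + N) * pword (upperBlock p N) (v :: S) / (upperBlock p N v b * pword p (v :: S))

lemma jumpFactor_pos (hA3 : A3 p N) (hC : GoodCycle p N v b c) {S : List ℕ}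
    (hSΨ : ∀ x ∈ v :: S, x ∈ Finset.Icc 1 N) (hvS : (v :: S).IsChain (edge p)) :
    0 < jumpFactor p N v b S :=
  div_pos (mul_pos (hA3.jump_pos (hC.mem v (by simp)) (hC.mem b (by simp))
      (List.isChain_cons_cons.1 hC.isChain).1.1) (pword_pos (hA3.isChain_upperBlock hSΨ hvS)))
    (mul_pos hC.upperBlock_pos (pword_pos hvS))

/-- Each copy of the cycle after the jump keeps at least its lower-level weight, so the bound
does not depend on `m`. -/
lemma jumpFactor_mul_le_pword_jumpLift (hp : ∀ a b, 0 ≤ p a b) (hC : GoodCycle p N v b c)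
    {S : List ℕ} (hvS : (v :: S).IsChain (edge p)) {x : List ℕ} (hx : x.getLast? = some v)
    (m : ℕ) :
    jumpFactor p N v b S * pword p (x ++ ((List.replicate (m + 1) (b :: c)).flatten ++ S)) ≤
      pword p (jumpLift N x ((List.replicate (m + 1) (b :: c)).flatten ++ S)) := by
  have hz : (List.replicate (m + 1) (b :: c)).flatten ++ S
      = b :: (c ++ ((List.replicate m (b :: c)).flatten ++ S)) := by
    simp [List.replicate_succ]
  rw [pword_append_of_getLast? hx, pword_cons_flatten_replicate_append hC.getLast?_eq, hz,
    pword_jumpLift hx, jumpFactor, ← mul_le_mul_iff_of_pos_left hC.upperBlock_pos]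
  set q := upperBlock p N
  have hQ : q v b * pword q (b :: (c ++ ((List.replicate m (b :: c)).flatten ++ S)))
      = pword q (v :: b :: c) ^ (m + 1) * pword q (v :: S) := by
    rw [← pword_cons_cons, ← hz, pword_cons_flatten_replicate_append hC.getLast?_eq]
  have hq : q v b ≠ 0 := hC.upperBlock_pos.ne'
  have hPs := pword_pos hvS
  calc q v b * (p v (b + N) * pword q (v :: S) / (q v b * pword p (v :: S)) *
        (pword p x * (pword p (v :: b :: c) ^ (m + 1) * pword p (v :: S))))
      = pword p x * p v (b + N) * (pword p (v :: b :: c) ^ (m + 1) * pword q (v :: S)) := by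
        field_simp
    _ ≤ pword p x * p v (b + N) * (pword q (v :: b :: c) ^ (m + 1) * pword q (v :: S)) := by
        have := pword_nonneg hp (v :: b :: c)
        gcongr
        · exact mul_nonneg (pword_nonneg hp x) (hp _ _)
        · exact pword_nonneg (fun _ _ => hp _ _) _
        · exact hC.pword_le hp
    _ = _ := by rw [← hQ]; ring

end Construction

section Estimate

variable {p : ℕ → ℕ → ℝ} {χ : ℕ → ℝ} {N v b : ℕ} {c : List ℕ}

def cycleWord (y c : List ℕ) (K : ℕ) (S : List ℕ) : List ℕ :=
  y ++ ((List.replicate K c).flatten ++ S)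

lemma length_cycleWord (y c : List ℕ) (K : ℕ) (S : List ℕ) :
    (cycleWord y c K S).length = y.length + K * c.length + S.length := by
  simp only [cycleWord, List.length_append, List.length_flatten, List.map_replicate,
    List.sum_replicate, smul_eq_mul]
  ring

lemma cycleWord_eq_append {y c S : List ℕ} {K j : ℕ} (hj : j ≤ K) :
    cycleWord y c K S =
      (y ++ (List.replicate j c).flatten) ++ ((List.replicate (K - j) c).flatten ++ S) := by
  rw [cycleWord, ← Nat.add_sub_cancel' hj, List.replicate_add, List.flatten_append,
    Nat.add_sub_cancel_left]
  simp only [List.append_assoc]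

lemma getLastD_cycleWord (y c : List ℕ) (K : ℕ) {S : List ℕ} {i : ℕ}
    (hSi : S.getLast? = some i) : (cycleWord y c K S).getLastD 0 = i := by
  simp [cycleWord, List.getLastD_eq_getLast?, List.getLast?_append, hSi]

lemma GoodCycle.mem_cycleWord (hC : GoodCycle p N v b c) {y S : List ℕ}
    (hyΨ : ∀ x ∈ y, x ∈ Finset.Icc 1 N) (hSΨ : ∀ x ∈ S, x ∈ Finset.Icc 1 N) (K : ℕ) :
    ∀ x ∈ cycleWord y (b :: c) K S, x ∈ Finset.Icc 1 N := by
  simp only [cycleWord, List.mem_append, List.mem_flatten, List.mem_replicate]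
  rintro x (hx | ⟨l, ⟨-, rfl⟩, hx⟩ | hx)
  exacts [hyΨ x hx, hC.mem x (List.mem_cons_of_mem v hx), hSΨ x hx]

lemma GoodCycle.isChain_cycleWord (hC : GoodCycle p N v b c) {y S : List ℕ}
    (hyv : y.getLast? = some v) (hy : y.IsChain (edge p)) (hvS : (v :: S).IsChain (edge p))
    (K : ℕ) : (cycleWord y (b :: c) K S).IsChain (edge p) :=
  isChain_append_of_getLast? hy hyv
    (isChain_cons_flatten_replicate_append hC.getLast?_eq hC.isChain_edge hvS K)

lemma injOn_jumpLift_cycleWord {y c S : List ℕ} {K : ℕ} (hc : c ≠ [])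
    (hΨ : ∀ x ∈ cycleWord y c K S, x ∈ Finset.Icc 1 N) :
    Set.InjOn (fun j => jumpLift N (y ++ (List.replicate j c).flatten)
      ((List.replicate (K - j) c).flatten ++ S)) (Finset.range K) := by
  have hcount : ∀ j < K, (jumpLift N (y ++ (List.replicate j c).flatten)
      ((List.replicate (K - j) c).flatten ++ S)).countP (· ≤ N) = y.length + j * c.length := by
    intro j hj
    have hsplit := cycleWord_eq_append (y := y) (c := c) (S := S) hj.le
    rw [countP_jumpLift
      (fun x hx => (Finset.mem_Icc.1 (hΨ x (hsplit ▸ List.mem_append_left _ hx))).2)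
      (fun x hx => (Finset.mem_Icc.1 (hΨ x (hsplit ▸ List.mem_append_right _ hx))).1),
      List.length_append, List.length_flatten, List.map_replicate, List.sum_replicate,
      smul_eq_mul]
  intro j₁ hj₁ j₂ hj₂ h
  have := congrArg (List.countP (· ≤ N)) h
  rw [hcount j₁ (Finset.mem_range.1 hj₁), hcount j₂ (Finset.mem_range.1 hj₂)] at this
  exact Nat.eq_of_mul_eq_mul_right (List.length_pos_iff.2 hc) (by omega)

lemma mem_Icc_two_mul {x : ℕ} (hx : x ∈ Finset.Icc 1 N) :
    x ∈ Finset.Icc 1 (2 * N) ∧ x + N ∈ Finset.Icc 1 (2 * N) := by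
  simp only [Finset.mem_Icc] at hx ⊢
  omega

lemma sum_le_Ipart (hp : ∀ a b, 0 ≤ p a b) (hχ : ∀ a ∈ Finset.Icc 1 (2 * N), 0 < χ a)
    {a j : ℕ} {t : List ℕ} (ha : a ∈ Finset.Icc 1 N) {T : Finset (List ℕ)}
    (hT : T ⊆ (Gam p N (a :: t)).filter fun τ => τ.getLastD 0 = j) :
    ∑ τ ∈ T, χ (τ.headD 0) * pword p τ ≤ Ipart p χ N j (a :: t) := by
  refine Finset.sum_le_sum_of_subset_of_nonneg hT fun τ hτ _ => mul_nonneg ?_ (pword_nonneg hp τ)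
  simp only [Gam, Finset.mem_filter] at hτ
  refine (hχ _ ?_).le
  rcases headD_of_mem_lifts hτ.1.1 with h | h <;> rw [h]
  exacts [(mem_Icc_two_mul ha).1, (mem_Icc_two_mul ha).2]

lemma mul_le_Ipart_upper (hp : ∀ a b, 0 ≤ p a b) (hχ : ∀ a ∈ Finset.Icc 1 (2 * N), 0 < χ a)
    (hA3 : A3 p N) (hC : GoodCycle p N v b c) {S : List ℕ} {i : ℕ} (hSi : S.getLast? = some i)
    (hSΨ : ∀ x ∈ S, x ∈ Finset.Icc 1 N) (hvS : (v :: S).IsChain (edge p)) {a : ℕ} {y : List ℕ}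
    (hyv : (a :: y).getLast? = some v) (hyΨ : ∀ x ∈ a :: y, x ∈ Finset.Icc 1 N)
    (hy : (a :: y).IsChain (edge p)) (K : ℕ) :
    K * (jumpFactor p N v b S * (χ a * pword p (cycleWord (a :: y) (b :: c) K S))) ≤
      Ipart p χ N (i + N) (cycleWord (a :: y) (b :: c) K S) := by
  set σ := cycleWord (a :: y) (b :: c) K S
  set R : ℕ → List ℕ := fun j => (List.replicate j (b :: c)).flatten
  have hσΨ : ∀ x ∈ σ, x ∈ Finset.Icc 1 N := hC.mem_cycleWord hyΨ hSΨ K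
  have hσ : σ.IsChain (edge p) := hC.isChain_cycleWord hyv hy hvS K
  set τ : ℕ → List ℕ := fun j => jumpLift N (a :: y ++ R j) (R (K - j) ++ S)
  have hτ : ∀ j < K, τ j ∈ (Gam p N σ).filter (fun τ => τ.getLastD 0 = i + N) ∧
      jumpFactor p N v b S * pword p σ ≤ pword p (τ j) := by
    intro j hj
    have hsplit : σ = (a :: y ++ R j) ++ (R (K - j) ++ S) := cycleWord_eq_append hj.le
    obtain ⟨m, hm⟩ : ∃ m, K - j = m + 1 := ⟨K - j - 1, by omega⟩
    refine ⟨Finset.mem_filter.2 ⟨?_, getLastD_jumpLift _ (by simp [List.getLast?_append, hSi])⟩, ?_⟩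
    · rw [hsplit]
      exact hA3.jumpLift_mem_Gam (hsplit ▸ hσΨ) (hsplit ▸ hσ)
    · rw [hsplit]
      simp only [τ, hm]
      exact jumpFactor_mul_le_pword_jumpLift hp hC hvS
        (getLast?_append_flatten_replicate hyv hC.getLast?_eq j) m
  have hinj : Set.InjOn τ (Finset.range K) := injOn_jumpLift_cycleWord (List.cons_ne_nil b c) hσΨ
  have hχa : 0 < χ a := hχ a (mem_Icc_two_mul (hyΨ a (by simp))).1
  calc (K : ℝ) * (jumpFactor p N v b S * (χ a * pword p σ))
      = ∑ j ∈ Finset.range K, χ ((τ j).headD 0) * (jumpFactor p N v b S * pword p σ) := by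
        simp only [τ, jumpLift, List.cons_append, List.headD_cons, Finset.sum_const,
          Finset.card_range, nsmul_eq_mul]
        ring
    _ ≤ ∑ j ∈ Finset.range K, χ ((τ j).headD 0) * pword p (τ j) :=
        Finset.sum_le_sum fun j hj =>
          mul_le_mul_of_nonneg_left (hτ j (Finset.mem_range.1 hj)).2 hχa.le
    _ = ∑ τ' ∈ (Finset.range K).image τ, χ (τ'.headD 0) * pword p τ' :=
        (Finset.sum_image (f := fun τ' => χ (τ'.headD 0) * pword p τ') hinj).symm
    _ ≤ Ipart p χ N (i + N) σ :=
        sum_le_Ipart hp hχ (hyΨ a (by simp))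
          (Finset.image_subset_iff.2 fun j hj => (hτ j (Finset.mem_range.1 hj)).1)

lemma isSword_cycleWord_and_Ipart_lt (hp : ∀ a b, 0 ≤ p a b)
    (hχ : ∀ a ∈ Finset.Icc 1 (2 * N), 0 < χ a) (hA3 : A3 p N) (hC : GoodCycle p N v b c)
    {S : List ℕ} {i : ℕ} (hSi : S.getLast? = some i) (hSΨ : ∀ x ∈ S, x ∈ Finset.Icc 1 N)
    (hvS : (v :: S).IsChain (edge p)) {a : ℕ} {y : List ℕ} (hyv : (a :: y).getLast? = some v)
    (hyΨ : ∀ x ∈ a :: y, x ∈ Finset.Icc 1 N) (hy : (a :: y).IsChain (edge p)) {K : ℕ}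
    (hK : χ (i + N) / (χ i * jumpFactor p N v b S) < K) :
    isSword p N (cycleWord (a :: y) (b :: c) K S) ∧
      (cycleWord (a :: y) (b :: c) K S).getLastD 0 = i ∧
      Ipart p χ N i (cycleWord (a :: y) (b :: c) K S) <
        χ i / χ (i + N) * Ipart p χ N (i + N) (cycleWord (a :: y) (b :: c) K S) := by
  set σ := cycleWord (a :: y) (b :: c) K S
  have hσΨ : ∀ x ∈ σ, x ∈ Finset.Icc 1 N := hC.mem_cycleWord hyΨ hSΨ K
  have hσ : σ.IsChain (edge p) := hC.isChain_cycleWord hyv hy hvS K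
  have hlast : σ.getLastD 0 = i := getLastD_cycleWord _ _ K hSi
  have hi := hSΨ i (List.mem_of_getLast? hSi)
  have hN : 0 < N := by have := Finset.mem_Icc.1 hi; omega
  have hχi := hχ i (mem_Icc_two_mul hi).1
  have hχiN := hχ (i + N) (mem_Icc_two_mul hi).2
  have hc₀ := jumpFactor_pos hA3 hC (List.forall_mem_cons.2 ⟨hC.mem v (by simp), hSΨ⟩) hvS
  have hI₁ : Ipart p χ N i σ = χ a * pword p σ :=
    hlast ▸ Ipart_getLastD_eq hN (fun _ ha _ hb => hA3.upper_lower_eq_zero ha hb) hσΨ hσ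
  have hI₂ := mul_le_Ipart_upper hp hχ hA3 hC hSi hSΨ hvS hyv hyΨ hy K
  have hpos : 0 < χ a * pword p σ :=
    mul_pos (hχ a (mem_Icc_two_mul (hyΨ a (by simp))).1) (pword_pos hσ)
  have hK' : χ (i + N) < K * (χ i * jumpFactor p N v b S) :=
    (div_lt_iff₀ (mul_pos hχi hc₀)).1 hK
  refine ⟨isSword_of_isChain (by simp [σ, cycleWord]) hσΨ hσ, hlast, ?_⟩
  calc Ipart p χ N i σ = χ a * pword p σ := hI₁
    _ < χ i / χ (i + N) * (K * (jumpFactor p N v b S * (χ a * pword p σ))) := by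
        rw [div_mul_eq_mul_div, lt_div_iff₀ hχiN]
        nlinarith
    _ ≤ χ i / χ (i + N) * Ipart p χ N (i + N) σ :=
        mul_le_mul_of_nonneg_left hI₂ (div_pos hχi hχiN).le

end Estimate

theorem stmt11_general
    (N : ℕ)
    (p : ℕ → ℕ → ℝ) (χ : ℕ → ℝ)
    (hp0 : ∀ i j, 0 ≤ p i j)
    (hpsum : ∀ i ∈ Finset.Icc 1 (2 * N), ∑ j ∈ Finset.Icc 1 (2 * N), p i j = 1)
    (hχpos : ∀ i ∈ Finset.Icc 1 (2 * N), 0 < χ i)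
    (hA1 : A1 p N) (hA3 : A3 p N) :
    ∀ i ∈ Finset.Icc 1 N, ∃ k0 : ℕ, ∀ n : ℕ, k0 ≤ n →
      ∃ σ : List ℕ, isSword p N σ ∧ σ.length = n ∧ σ.getLastD 0 = i ∧
        Ipart p χ N i σ < χ i / χ (i + N) * Ipart p χ N (i + N) σ := by
  intro i hi
  obtain ⟨v, b, c, hC⟩ := exists_goodCycle hp0 hpsum hA3 ⟨i, hi⟩
  obtain ⟨d, hdΨ, hd⟩ := hA1.1 v (hC.mem v (by simp)) i hi
  have hSΨ : ∀ x ∈ d ++ [i], x ∈ Finset.Icc 1 N := fun x hx =>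
    (List.mem_append.1 hx).elim (hdΨ x) fun h => List.mem_singleton.1 h ▸ hi
  obtain ⟨K, hK⟩ := exists_nat_gt (χ (i + N) / (χ i * jumpFactor p N v b (d ++ [i])))
  refine ⟨K * (c.length + 1) + (d.length + 1) + 1, fun n hn => ?_⟩
  obtain ⟨_ | ⟨a, y⟩, hylen, hyv, hy, hyΨ⟩ :=
    hC.exists_walk (m := n - (K * (c.length + 1) + (d.length + 1))) (by omega)
  · cases hyv
  obtain ⟨hσ, hlast, hlt⟩ := isSword_cycleWord_and_Ipart_lt hp0 hχpos hA3 hC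
    List.getLast?_concat hSΨ hd hyv hyΨ hy hK
  refine ⟨_, hσ, ?_, hlast, hlt⟩
  simp only [length_cycleWord, List.length_cons, List.length_append, List.length_nil] at hylen ⊢
  omega

/-- **Lemma 2.5.** Assume (A1)–(A3). For every `i ∈ Ψ` there exists `k₀` such that for
every `n ≥ k₀` there is some `σ ∈ 𝒮_n(i)` with `I_{1,σ} < (χ_i/χ_{i⁺}) I_{2,σ}`. -/
theorem stmt11
    (N : ℕ) (hN : 2 ≤ N)
    (p : ℕ → ℕ → ℝ) (χ : ℕ → ℝ)
    (hp0 : ∀ i j, 0 ≤ p i j)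
    (hpsupp : ∀ i j, 0 < p i j → i ∈ Finset.Icc 1 (2 * N) ∧ j ∈ Finset.Icc 1 (2 * N))
    (hpsum : ∀ i ∈ Finset.Icc 1 (2 * N), ∑ j ∈ Finset.Icc 1 (2 * N), p i j = 1)
    (hχpos : ∀ i ∈ Finset.Icc 1 (2 * N), 0 < χ i)
    (hχsum : ∑ i ∈ Finset.Icc 1 (2 * N), χ i = 1)
    (hA1 : A1 p N) (hA2 : A2 p N) (hA3 : A3 p N) :
    ∀ i ∈ Finset.Icc 1 N, ∃ k0 : ℕ, ∀ n : ℕ, k0 ≤ n →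
      ∃ σ : List ℕ, isSword p N σ ∧ σ.length = n ∧ σ.getLastD 0 = i ∧
        Ipart p χ N i σ < χ i / χ (i + N) * Ipart p χ N (i + N) σ :=
  stmt11_general N p χ hp0 hpsum hχpos hA1 hA3

end MTM

end
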